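/- arXiv:2105.00956 — 2 statements merged into one kernel-verified Lean document; each statement's English description precedes it below -/
import Mathlib

section
/- Let H1 = (V1, 𝓔1) and H2 = (V2, 𝓔2) be finite hypergraphs, and let a message-passing UniGNN (same layer functions φ1^t, φ2^t and same constant initial feature c on both hypergraphs) compute features h^t. Let T ≥ 0 and suppose that the multisets of 1-GWL labels agree at every iteration t ∈ {0, …, T}, i.e. {{ l^t_{H1,i} : i ∈ V1 }} = {{ l^t_{H2,i} : i ∈ V2 }}, and that the multisets of UniGNN features agree at every iteration t ∈ {0, …, T−1}. Then the multisets of UniGNN features also agree at iteration T: {{ h^T_{H1,i} : i ∈ V1 }} = {{ h^T_{H2,i} : i ∈ V2 }}. -/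
/-- A finite hypergraph on a vertex type `V`: a finite set of nonempty
finite hyperedges. -/
structure FinHypergraph (V : Type) [DecidableEq V] where
  edges : Finset (Finset V)
  edges_nonempty : ∀ e ∈ edges, e.Nonempty

namespace FinHypergraph

variable {V : Type} [DecidableEq V]

/-- The incident hyperedges `E_i` of a vertex `i`. -/
def incident (H : FinHypergraph V) (i : V) : Finset (Finset V) :=
  H.edges.filter (fun e => i ∈ e)

end FinHypergraph

/-- The type of 1-GWL labels at iteration `t`. -/
def LabelType : ℕ → Type
  | 0 => ℕ
  | t + 1 => Multiset (LabelType t × Multiset (LabelType t))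

/-- The 1-GWL vertex label `l^t_{H,i}`: all vertices start with label `0`, and
`l^{t+1}_i = {{ (l^t_i, l^t_e) : e ∈ E_i }}` where `l^t_e = {{ l^t_j : j ∈ e }}`. -/
def gwlLabel {V : Type} [DecidableEq V] (H : FinHypergraph V) : (t : ℕ) → V → LabelType t
  | 0, _ => (0 : ℕ)
  | t + 1, i =>
      ((H.incident i).val.map fun e => (gwlLabel H t i, e.val.map (gwlLabel H t)))

/-- The 1-GWL hyperedge label `l^t_e = {{ l^t_j : j ∈ e }}`. -/
def gwlEdgeLabel {V : Type} [DecidableEq V] (H : FinHypergraph V) (t : ℕ) (e : Finset V) :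
    Multiset (LabelType t) :=
  e.val.map (gwlLabel H t)

/-- The multiset of 1-GWL labels of all vertices, `{{ l^t_{H,i} : i ∈ V }}`. -/
def gwlMultiset {V : Type} [DecidableEq V] [Fintype V] (H : FinHypergraph V) (t : ℕ) :
    Multiset (LabelType t) :=
  (Finset.univ : Finset V).val.map (gwlLabel H t)

/-- The UniGNN feature `h^t_{H,i}` computed by two-stage message passing with
first-stage aggregations `φ1`, second-stage aggregations `φ2` and constant initial
feature `c`:  `h^{t+1}_i = φ2 t (h^t_i) {{ φ1 t {{ h^t_j : j ∈ e }} : e ∈ E_i }}`. -/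
def uniFeat {V : Type} [DecidableEq V] {X : Type}
    (φ1 : ℕ → Multiset X → X) (φ2 : ℕ → X → Multiset X → X) (c : X)
    (H : FinHypergraph V) : (t : ℕ) → V → X
  | 0, _ => c
  | t + 1, i =>
      φ2 t (uniFeat φ1 φ2 c H t i)
        ((H.incident i).val.map fun e => φ1 t (e.val.map (uniFeat φ1 φ2 c H t)))

/-- The multiset of UniGNN features of all vertices, `{{ h^t_{H,i} : i ∈ V }}`. -/
def uniFeatMultiset {V : Type} [DecidableEq V] [Fintype V] {X : Type}
    (φ1 : ℕ → Multiset X → X) (φ2 : ℕ → X → Multiset X → X) (c : X)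
    (H : FinHypergraph V) (t : ℕ) : Multiset X :=
  (Finset.univ : Finset V).val.map (uniFeat φ1 φ2 c H t)

/-- `f` is an isomorphism between hypergraphs `H1` and `H2`. -/
def IsHypergraphIso {V1 V2 : Type} [DecidableEq V1] [DecidableEq V2]
    (H1 : FinHypergraph V1) (H2 : FinHypergraph V2) (f : V1 ≃ V2) : Prop :=
  ∀ e : Finset V1, e ∈ H1.edges ↔ e.image f ∈ H2.edges

/-!
UniGNN features are a function of 1-GWL labels: by induction on `t`, two vertices (of possibly
different hypergraphs) with the same label at `t` have the same feature at `t`. Indeed the label at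
`t + 1` determines the label at `t` together with the multiset of labels of the incident hyperedges,
which by induction determine the inputs of `φ2 t`. Mapping the equal label multisets at `T` through
this function gives equal feature multisets.
-/

theorem Multiset.map_eq_map_of_map_eq_map {α β γ δ : Type*} {s : Multiset α} {t : Multiset β}
    {f : α → γ} {g : β → γ} {F : α → δ} {G : β → δ} (h : s.map f = t.map g)
    (hfg : ∀ a b, f a = g b → F a = G b) : s.map F = t.map G :=
  Multiset.rel_eq.mp <| Multiset.rel_map.mpr <|
    (Multiset.rel_map.mp (Multiset.rel_eq.mpr h)).mono fun a _ b _ hab => hfg a b hab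

section GWL

variable {V1 V2 : Type} [DecidableEq V1] [DecidableEq V2]
  {H1 : FinHypergraph V1} {H2 : FinHypergraph V2}

theorem gwlLabel_eq_of_incident_eq_empty {i : V1} {j : V2} (hi : H1.incident i = ∅)
    (hj : H2.incident j = ∅) : ∀ t, gwlLabel H1 t i = gwlLabel H2 t j
  | 0 => rfl
  | _ + 1 => by simp only [gwlLabel, hi, hj, Finset.empty_val, Multiset.map_zero]; rfl

theorem card_incident_eq_of_gwlLabel_succ_eq {t : ℕ} {i : V1} {j : V2}
    (h : gwlLabel H1 (t + 1) i = gwlLabel H2 (t + 1) j) :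
    (H1.incident i).card = (H2.incident j).card := by
  simpa only [gwlLabel, Multiset.card_map, Finset.card_val] using congrArg Multiset.card h

theorem gwlLabel_eq_of_gwlLabel_succ_eq {t : ℕ} {i : V1} {j : V2}
    (h : gwlLabel H1 (t + 1) i = gwlLabel H2 (t + 1) j) : gwlLabel H1 t i = gwlLabel H2 t j := by
  obtain hi | ⟨e, he⟩ := (H1.incident i).eq_empty_or_nonempty
  · have hj : H2.incident j = ∅ := by
      rw [← Finset.card_eq_zero, ← card_incident_eq_of_gwlLabel_succ_eq h, hi, Finset.card_empty]
    exact gwlLabel_eq_of_incident_eq_empty hi hj t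
  · have hmem := Multiset.mem_map_of_mem
      (fun e => (gwlLabel H1 t i, e.val.map (gwlLabel H1 t))) (Finset.mem_val.mpr he)
    simp only [gwlLabel] at h
    rw [h, Multiset.mem_map] at hmem
    obtain ⟨_, _, heq⟩ := hmem
    exact (congrArg Prod.fst heq).symm

variable {X : Type} (φ1 : ℕ → Multiset X → X) (φ2 : ℕ → X → Multiset X → X) (c : X)

theorem uniFeat_eq_of_gwlLabel_eq (t : ℕ) {i : V1} {j : V2}
    (h : gwlLabel H1 t i = gwlLabel H2 t j) : uniFeat φ1 φ2 c H1 t i = uniFeat φ1 φ2 c H2 t j := by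
  induction t generalizing i j with
  | zero => rfl
  | succ t ih =>
    have hedges : (H1.incident i).val.map (fun e => φ1 t (e.val.map (uniFeat φ1 φ2 c H1 t))) =
        (H2.incident j).val.map (fun e => φ1 t (e.val.map (uniFeat φ1 φ2 c H2 t))) :=
      Multiset.map_eq_map_of_map_eq_map h fun _ _ hee =>
        congrArg (φ1 t) (Multiset.map_eq_map_of_map_eq_map (congrArg Prod.snd hee) fun _ _ => ih)
    simp only [uniFeat, ih (gwlLabel_eq_of_gwlLabel_succ_eq h), hedges]

end GWL

theorem uniFeatMultiset_eq_of_gwlMultiset_eq_general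
    {X : Type} (φ1 : ℕ → Multiset X → X) (φ2 : ℕ → X → Multiset X → X) (c : X)
    {V1 V2 : Type} [DecidableEq V1] [Fintype V1] [DecidableEq V2] [Fintype V2]
    (H1 : FinHypergraph V1) (H2 : FinHypergraph V2) (T : ℕ)
    (hl : ∀ t ≤ T, gwlMultiset H1 t = gwlMultiset H2 t) :
    uniFeatMultiset φ1 φ2 c H1 T = uniFeatMultiset φ1 φ2 c H2 T :=
  Multiset.map_eq_map_of_map_eq_map (hl T le_rfl) fun _ _ => uniFeat_eq_of_gwlLabel_eq φ1 φ2 c T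

/-- If the multisets of 1-GWL labels of `H1` and `H2` agree for all `t ∈ {0,…,T}` and
the multisets of UniGNN features agree for all `t ∈ {0,…,T-1}`, then the multisets of
UniGNN features also agree at iteration `T`. -/
theorem uniFeatMultiset_eq_of_gwlMultiset_eq
    {X : Type} (φ1 : ℕ → Multiset X → X) (φ2 : ℕ → X → Multiset X → X) (c : X)
    {V1 V2 : Type} [DecidableEq V1] [Fintype V1] [DecidableEq V2] [Fintype V2]
    (H1 : FinHypergraph V1) (H2 : FinHypergraph V2) (T : ℕ)
    (hl : ∀ t ≤ T, gwlMultiset H1 t = gwlMultiset H2 t)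
    (hh : ∀ t < T, uniFeatMultiset φ1 φ2 c H1 t = uniFeatMultiset φ1 φ2 c H2 t) :
    uniFeatMultiset φ1 φ2 c H1 T = uniFeatMultiset φ1 φ2 c H2 T :=
  uniFeatMultiset_eq_of_gwlMultiset_eq_general φ1 φ2 c H1 H2 T hl
end

section
/- (Corollary 1, vertex-level version) Let a message-passing UniGNN have, for every layer t, injective first-stage aggregation φ1^t and injective second-stage aggregation φ2^t. If for two finite hypergraphs H1, H2 and vertices i1 ∈ V1, i2 ∈ V2 the 1-GWL test distinguishes the local substructures rooted at i1 and i2 at depth t — that is, l^t_{H1,i1} ≠ l^t_{H2,i2} — then the UniGNN also distinguishes them: h^t_{H1,i1} ≠ h^t_{H2,i2}. -/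
/-! Injective aggregations lose no information: by induction on `t`, peeling `φ2 t` and then
`φ1 t` off `h^{t+1}_i` recovers `h^t_i` and the multiset of hyperedge multisets `{{h^t_j : j ∈ e}}`,
which by induction determine `l^t_i` and the `l^t_e`, hence `l^{t+1}_i`. -/

theorem Multiset.map_eq_map_of_forall_eq_imp {α β γ δ : Type*} {f : α → γ} {g : β → γ}
    {f' : α → δ} {g' : β → δ} {s : Multiset α} {t : Multiset β}
    (h : ∀ a b, f a = g b → f' a = g' b) (hst : s.map f = t.map g) : s.map f' = t.map g' := by
  rw [← Multiset.rel_eq, Multiset.rel_map] at hst ⊢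
  exact hst.mono fun a _ b _ => h a b

section

variable {X : Type} {φ1 : ℕ → Multiset X → X} {φ2 : ℕ → X → Multiset X → X} {c : X}
  {V1 V2 : Type} [DecidableEq V1] [DecidableEq V2] (H1 : FinHypergraph V1) (H2 : FinHypergraph V2)

theorem gwlLabel_eq_of_uniFeat_eq (hφ1 : ∀ t, Function.Injective (φ1 t))
    (hφ2 : ∀ t, Function.Injective (fun p : X × Multiset X => φ2 t p.1 p.2)) :
    ∀ t i1 i2, uniFeat φ1 φ2 c H1 t i1 = uniFeat φ1 φ2 c H2 t i2 →
      gwlLabel H1 t i1 = gwlLabel H2 t i2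
  | 0, _, _, _ => rfl
  | t + 1, i1, i2, h => by
    have ih := gwlLabel_eq_of_uniFeat_eq hφ1 hφ2 t
    obtain ⟨hroot, hedges⟩ := Prod.mk.inj (@hφ2 t (_, _) (_, _) h)
    exact Multiset.map_eq_map_of_forall_eq_imp
      (fun e1 e2 he => Prod.ext (ih i1 i2 hroot)
        (Multiset.map_eq_map_of_forall_eq_imp ih (hφ1 t he))) hedges

end

theorem uniGNN_distinguishes_local_substructures_general
    {X : Type} (φ1 : ℕ → Multiset X → X) (φ2 : ℕ → X → Multiset X → X) (c : X)
    (hφ1 : ∀ t, Function.Injective (φ1 t))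
    (hφ2 : ∀ t, Function.Injective (fun p : X × Multiset X => φ2 t p.1 p.2))
    {V1 V2 : Type} [DecidableEq V1] [DecidableEq V2]
    (H1 : FinHypergraph V1) (H2 : FinHypergraph V2) (t : ℕ) (i1 : V1) (i2 : V2)
    (hl : gwlLabel H1 t i1 ≠ gwlLabel H2 t i2) :
    uniFeat φ1 φ2 c H1 t i1 ≠ uniFeat φ1 φ2 c H2 t i2 :=
  fun h => hl (gwlLabel_eq_of_uniFeat_eq H1 H2 hφ1 hφ2 t i1 i2 h)

/-- **Corollary 1 (vertex-level).** If all first-stage aggregations `φ1^t` and all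
second-stage aggregations `φ2^t` of a message-passing UniGNN are injective, and the
1-GWL test distinguishes the local substructures rooted at vertices `i1` of `H1` and
`i2` of `H2` at depth `t` (i.e. `l^t_{H1,i1} ≠ l^t_{H2,i2}`), then the UniGNN also
distinguishes them: `h^t_{H1,i1} ≠ h^t_{H2,i2}`. -/
theorem uniGNN_distinguishes_local_substructures
    {X : Type} (φ1 : ℕ → Multiset X → X) (φ2 : ℕ → X → Multiset X → X) (c : X)
    (hφ1 : ∀ t, Function.Injective (φ1 t))
    (hφ2 : ∀ t, Function.Injective (fun p : X × Multiset X => φ2 t p.1 p.2))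
    {V1 V2 : Type} [DecidableEq V1] [Fintype V1] [DecidableEq V2] [Fintype V2]
    (H1 : FinHypergraph V1) (H2 : FinHypergraph V2) (t : ℕ) (i1 : V1) (i2 : V2)
    (hl : gwlLabel H1 t i1 ≠ gwlLabel H2 t i2) :
    uniFeat φ1 φ2 c H1 t i1 ≠ uniFeat φ1 φ2 c H2 t i2 :=
  uniGNN_distinguishes_local_substructures_general φ1 φ2 c hφ1 hφ2 H1 H2 t i1 i2 hl
end
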